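/- Let 𝔰 ⊂ sl(3,ℂ) be the subalgebra of trace-zero matrices whose third row and third column vanish (the upper-left embedded copy of sl(2,ℂ)). Set V₊ = span_ℂ{e₁₃, e₂₃}, V₋ = span_ℂ{e₃₁, e₃₂}, and h = diag(1,1,−2). If 𝔩 is a complex Lie subalgebra of sl(3,ℂ) with 𝔰 ⊆ 𝔩 and dim_ℂ 𝔩 ≥ 5, then 𝔩 is one of the following five subalgebras: 𝔰 ⊕ V₊, 𝔰 ⊕ V₋, 𝔰 ⊕ V₊ ⊕ ℂh, 𝔰 ⊕ V₋ ⊕ ℂh, or sl(3,ℂ). -/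

import Mathlib

/-!
Reducing `X ∈ 𝔩` modulo `𝔰` leaves an element of `ℂh ⊕ V₊ ⊕ V₋`, on which `ad diag(1,-1,0)`
acts with eigenvalue `0` on `ℂh`, `1` on `span{e₁₃, e₃₂}` and `-1` on `span{e₂₃, e₃₁}`;
so each of these three components of `X` lies in `𝔩`. A component `a e₁₃ + d e₃₂` with
`a d ≠ 0` brackets, through `e₂₁ ∈ 𝔰`, to a nonzero multiple of `h`, and `ad h` then separates
`e₁₃` from `e₃₂`. As `𝔰` moves `e₁₃ ↔ e₂₃` and `e₃₁ ↔ e₃₂`, `𝔩` is cut out of `sl(3,ℂ)` by which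
of `V₊`, `V₋`, `ℂh` it contains. Containing neither `V₊` nor `V₋` leaves `dim 𝔩 ≤ 4`, and
containing both puts `h` in `[V₊, V₋] + 𝔰`.
-/

attribute [local instance 100] LieRing.ofAssociativeRing

/-- `sl(3,ℂ)`, as the set of trace-zero `3×3` complex matrices. -/
def sl3 : Set (Matrix (Fin 3) (Fin 3) ℂ) := {X | Matrix.trace X = 0}

/-- The upper-left embedded copy `𝔰 ≅ sl(2,ℂ)`: trace-zero matrices whose third row and
third column vanish. -/
def slTwo : Set (Matrix (Fin 3) (Fin 3) ℂ) :=
  {X | X ∈ sl3 ∧ (∀ j, X 2 j = 0) ∧ (∀ i, X i 2 = 0)}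

/-- The matrix element `e₁₃`. -/
def e13 : Matrix (Fin 3) (Fin 3) ℂ := Matrix.single 0 2 1

/-- The matrix element `e₂₃`. -/
def e23 : Matrix (Fin 3) (Fin 3) ℂ := Matrix.single 1 2 1

/-- The matrix element `e₃₁`. -/
def e31 : Matrix (Fin 3) (Fin 3) ℂ := Matrix.single 2 0 1

/-- The matrix element `e₃₂`. -/
def e32 : Matrix (Fin 3) (Fin 3) ℂ := Matrix.single 2 1 1

/-- The diagonal matrix `h = diag(1,1,−2)`. -/
def hDiag : Matrix (Fin 3) (Fin 3) ℂ := Matrix.diagonal ![1, 1, -2]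

/-- The direct sum `𝔰 ⊕ V₊` where `V₊ = span{e₁₃, e₂₃}`. -/
def sVplus : Set (Matrix (Fin 3) (Fin 3) ℂ) :=
  {X | ∃ s ∈ slTwo, ∃ c₁ c₂ : ℂ, X = s + c₁ • e13 + c₂ • e23}

/-- The direct sum `𝔰 ⊕ V₋` where `V₋ = span{e₃₁, e₃₂}`. -/
def sVminus : Set (Matrix (Fin 3) (Fin 3) ℂ) :=
  {X | ∃ s ∈ slTwo, ∃ c₁ c₂ : ℂ, X = s + c₁ • e31 + c₂ • e32}

/-- The direct sum `𝔰 ⊕ V₊ ⊕ ℂh`. -/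
def sVplusH : Set (Matrix (Fin 3) (Fin 3) ℂ) :=
  {X | ∃ s ∈ slTwo, ∃ c₁ c₂ c₃ : ℂ, X = s + c₁ • e13 + c₂ • e23 + c₃ • hDiag}

/-- The direct sum `𝔰 ⊕ V₋ ⊕ ℂh`. -/
def sVminusH : Set (Matrix (Fin 3) (Fin 3) ℂ) :=
  {X | ∃ s ∈ slTwo, ∃ c₁ c₂ c₃ : ℂ, X = s + c₁ • e31 + c₂ • e32 + c₃ • hDiag}

theorem LieSubalgebra.ad_eigencomponents_mem {K A : Type*} [CommRing K] [Invertible (2 : K)]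
    [LieRing A] [LieAlgebra K A] (L : LieSubalgebra K A) {x u v w : A} (hx : x ∈ L)
    (hu : ⁅x, u⁆ = 0) (hv : ⁅x, v⁆ = v) (hw : ⁅x, w⁆ = -w) (h : u + v + w ∈ L) :
    u ∈ L ∧ v ∈ L ∧ w ∈ L := by
  have hdiff : v - w ∈ L := by simpa [hu, hv, hw, sub_eq_add_neg] using L.lie_mem hx h
  have hsum : v + w ∈ L := by simpa [hv, hw, lie_sub] using L.lie_mem hx hdiff
  have hv' : v = ⅟(2 : K) • ((v - w) + (v + w)) := by
    rw [show (v - w) + (v + w) = (2 : K) • v by rw [two_smul]; abel, smul_smul, invOf_mul_self,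
      one_smul]
  have hw' : w = ⅟(2 : K) • ((v + w) - (v - w)) := by
    rw [show (v + w) - (v - w) = (2 : K) • w by rw [two_smul]; abel, smul_smul, invOf_mul_self,
      one_smul]
  refine ⟨?_, ?_, ?_⟩
  · simpa [add_assoc] using L.sub_mem h hsum
  · rw [hv']; exact L.smul_mem _ (L.add_mem hdiff hsum)
  · rw [hw']; exact L.smul_mem _ (L.sub_mem hsum hdiff)

theorem LieSubalgebra.eq_zero_of_smul_mem_of_notMem {K A : Type*} [Field K] [LieRing A]
    [LieAlgebra K A] (L : LieSubalgebra K A) {c : K} {x : A} (h : c • x ∈ L) (hx : x ∉ L) :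
    c = 0 := by
  by_contra hc
  exact hx ((L.toSubmodule.smul_mem_iff hc).1 h)

theorem LieSubalgebra.smul_mem_of_notMem_imp_eq_zero {K A : Type*} [CommRing K] [LieRing A]
    [LieAlgebra K A] (L : LieSubalgebra K A) {c : K} {x : A} (h : x ∉ L → c = 0) :
    c • x ∈ L := by
  by_cases hx : x ∈ L
  · exact L.smul_mem c hx
  · simp [h hx]

open Matrix

def e12 : Matrix (Fin 3) (Fin 3) ℂ := single 0 1 1
def e21 : Matrix (Fin 3) (Fin 3) ℂ := single 1 0 1
def hTwo : Matrix (Fin 3) (Fin 3) ℂ := diagonal ![1, -1, 0]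

noncomputable def slTwoPart (X : Matrix (Fin 3) (Fin 3) ℂ) : Matrix (Fin 3) (Fin 3) ℂ :=
  !![(X 0 0 - X 1 1) / 2, X 0 1, 0; X 1 0, (X 1 1 - X 0 0) / 2, 0; 0, 0, 0]

theorem lie_hTwo_e13 : ⁅hTwo, e13⁆ = e13 := by
  ext i j; fin_cases i <;> fin_cases j <;> simp [Ring.lie_def, hTwo, e13]
theorem lie_hTwo_e32 : ⁅hTwo, e32⁆ = e32 := by
  ext i j; fin_cases i <;> fin_cases j <;> simp [Ring.lie_def, hTwo, e32]
theorem lie_hTwo_e23 : ⁅hTwo, e23⁆ = -e23 := by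
  ext i j; fin_cases i <;> fin_cases j <;> simp [Ring.lie_def, hTwo, e23]
theorem lie_hTwo_e31 : ⁅hTwo, e31⁆ = -e31 := by
  ext i j; fin_cases i <;> fin_cases j <;> simp [Ring.lie_def, hTwo, e31]
theorem lie_hTwo_hDiag : ⁅hTwo, hDiag⁆ = 0 := by
  simp [Ring.lie_def, hTwo, hDiag, mul_comm]
theorem lie_hDiag_e13 : ⁅hDiag, e13⁆ = (3 : ℂ) • e13 := by
  ext i j; fin_cases i <;> fin_cases j <;> simp [Ring.lie_def, hDiag, e13]; norm_num
theorem lie_hDiag_e23 : ⁅hDiag, e23⁆ = (3 : ℂ) • e23 := by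
  ext i j; fin_cases i <;> fin_cases j <;> simp [Ring.lie_def, hDiag, e23]; norm_num
theorem lie_hDiag_e31 : ⁅hDiag, e31⁆ = -((3 : ℂ) • e31) := by
  ext i j; fin_cases i <;> fin_cases j <;> simp [Ring.lie_def, hDiag, e31]; norm_num
theorem lie_hDiag_e32 : ⁅hDiag, e32⁆ = -((3 : ℂ) • e32) := by
  ext i j; fin_cases i <;> fin_cases j <;> simp [Ring.lie_def, hDiag, e32]; norm_num
theorem lie_e21_e13 : ⁅e21, e13⁆ = e23 := by
  simp [Ring.lie_def, e21, e13, e23, single_mul_single_same, single_mul_single_of_ne]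
theorem lie_e12_e23 : ⁅e12, e23⁆ = e13 := by
  simp [Ring.lie_def, e12, e13, e23, single_mul_single_same, single_mul_single_of_ne]
theorem lie_e12_e31 : ⁅e12, e31⁆ = -e32 := by
  simp [Ring.lie_def, e12, e31, e32, single_mul_single_same, single_mul_single_of_ne]
theorem lie_e21_e32 : ⁅e21, e32⁆ = -e31 := by
  simp [Ring.lie_def, e21, e31, e32, single_mul_single_same, single_mul_single_of_ne]
theorem two_smul_lie_e13_e31 : (2 : ℂ) • ⁅e13, e31⁆ = hDiag + hTwo := by
  ext i j; fin_cases i <;> fin_cases j <;> simp [Ring.lie_def, hTwo, e13, e31, hDiag]; norm_num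
theorem lie_lie_e21_plus (a d : ℂ) :
    ⁅a • e13 + d • e32, ⁅e21, a • e13 + d • e32⁆⁆ = -(a * d) • hDiag := by
  ext i j; fin_cases i <;> fin_cases j <;>
    simp [Ring.lie_def, e21, e13, e32, hDiag, mul_apply, Fin.sum_univ_three]; ring
theorem lie_lie_e12_minus (b c : ℂ) :
    ⁅b • e23 + c • e31, ⁅e12, b • e23 + c • e31⁆⁆ = -(b * c) • hDiag := by
  ext i j; fin_cases i <;> fin_cases j <;>
    simp [Ring.lie_def, e12, e23, e31, hDiag, mul_apply, Fin.sum_univ_three]; ring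

theorem e12_mem_slTwo : e12 ∈ slTwo :=
  ⟨by simp [sl3, e12], by simp [e12], by simp [e12]⟩
theorem e21_mem_slTwo : e21 ∈ slTwo :=
  ⟨by simp [sl3, e21], by simp [e21], by simp [e21]⟩
theorem hTwo_mem_slTwo : hTwo ∈ slTwo :=
  ⟨by simp [sl3, hTwo, trace_fin_three], fun j => by fin_cases j <;> simp [hTwo],
    fun i => by fin_cases i <;> simp [hTwo]⟩
theorem slTwoPart_mem_slTwo (X : Matrix (Fin 3) (Fin 3) ℂ) : slTwoPart X ∈ slTwo :=
  ⟨by simp [sl3, slTwoPart, trace_fin_three]; ring,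
    fun j => by fin_cases j <;> simp [slTwoPart], fun i => by fin_cases i <;> simp [slTwoPart]⟩

theorem sub_slTwoPart_eq {X : Matrix (Fin 3) (Fin 3) ℂ} (hX : X ∈ sl3) :
    X - slTwoPart X = (-(X 2 2) / 2) • hDiag + (X 0 2 • e13 + X 2 1 • e32) +
      (X 1 2 • e23 + X 2 0 • e31) := by
  have h22 : X 2 2 = -(X 0 0 + X 1 1) := by
    rw [sl3, Set.mem_ofPred_eq, trace_fin_three] at hX; linear_combination hX
  ext i j; fin_cases i <;> fin_cases j <;>
    simp [slTwoPart, hDiag, e13, e23, e31, e32, h22] <;> ring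

theorem mem_sVplus_iff {X : Matrix (Fin 3) (Fin 3) ℂ} :
    X ∈ sVplus ↔ X ∈ sl3 ∧ X 2 0 = 0 ∧ X 2 1 = 0 ∧ X 2 2 = 0 := by
  constructor
  · rintro ⟨s, ⟨hs, hrow, -⟩, c₁, c₂, rfl⟩
    simp_all [sl3, trace_fin_three, e13, e23]
  · rintro ⟨hX, h20, h21, h22⟩
    refine ⟨slTwoPart X, slTwoPart_mem_slTwo X, X 0 2, X 1 2,
      (eq_add_of_sub_eq' (sub_slTwoPart_eq hX)).trans ?_⟩
    simp [h20, h21, h22, add_assoc]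

theorem mem_sVminus_iff {X : Matrix (Fin 3) (Fin 3) ℂ} :
    X ∈ sVminus ↔ X ∈ sl3 ∧ X 0 2 = 0 ∧ X 1 2 = 0 ∧ X 2 2 = 0 := by
  constructor
  · rintro ⟨s, ⟨hs, -, hcol⟩, c₁, c₂, rfl⟩
    simp_all [sl3, trace_fin_three, e31, e32]
  · rintro ⟨hX, h02, h12, h22⟩
    refine ⟨slTwoPart X, slTwoPart_mem_slTwo X, X 2 0, X 2 1,
      (eq_add_of_sub_eq' (sub_slTwoPart_eq hX)).trans ?_⟩
    simp only [h02, h12, h22, neg_zero, zero_div, zero_smul, zero_add]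
    abel

theorem mem_sVplusH_iff {X : Matrix (Fin 3) (Fin 3) ℂ} :
    X ∈ sVplusH ↔ X ∈ sl3 ∧ X 2 0 = 0 ∧ X 2 1 = 0 := by
  constructor
  · rintro ⟨s, ⟨hs, hrow, -⟩, c₁, c₂, c₃, rfl⟩
    simp_all [sl3, trace_fin_three, e13, e23, hDiag]
    linear_combination hs
  · rintro ⟨hX, h20, h21⟩
    refine ⟨slTwoPart X, slTwoPart_mem_slTwo X, X 0 2, X 1 2, -(X 2 2) / 2,
      (eq_add_of_sub_eq' (sub_slTwoPart_eq hX)).trans ?_⟩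
    simp only [h20, h21, zero_smul, add_zero]
    abel

theorem mem_sVminusH_iff {X : Matrix (Fin 3) (Fin 3) ℂ} :
    X ∈ sVminusH ↔ X ∈ sl3 ∧ X 0 2 = 0 ∧ X 1 2 = 0 := by
  constructor
  · rintro ⟨s, ⟨hs, -, hcol⟩, c₁, c₂, c₃, rfl⟩
    simp_all [sl3, trace_fin_three, e31, e32, hDiag]
    linear_combination hs
  · rintro ⟨hX, h02, h12⟩
    refine ⟨slTwoPart X, slTwoPart_mem_slTwo X, X 2 0, X 2 1, -(X 2 2) / 2,
      (eq_add_of_sub_eq' (sub_slTwoPart_eq hX)).trans ?_⟩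
    simp only [h02, h12, zero_smul, zero_add]
    abel

section

variable {L : LieSubalgebra ℂ (Matrix (Fin 3) (Fin 3) ℂ)}

theorem e23_mem_iff (hs : slTwo ⊆ L) : e23 ∈ L ↔ e13 ∈ L :=
  ⟨fun h => lie_e12_e23 ▸ L.lie_mem (hs e12_mem_slTwo) h,
    fun h => lie_e21_e13 ▸ L.lie_mem (hs e21_mem_slTwo) h⟩

theorem e32_mem_iff (hs : slTwo ⊆ L) : e32 ∈ L ↔ e31 ∈ L :=
  ⟨fun h => by simpa [lie_e21_e32] using L.lie_mem (hs e21_mem_slTwo) h,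
    fun h => by simpa [lie_e12_e31] using L.lie_mem (hs e12_mem_slTwo) h⟩

theorem hDiag_mem_of_e13_mem_of_e31_mem (hs : slTwo ⊆ L) (h13 : e13 ∈ L) (h31 : e31 ∈ L) :
    hDiag ∈ L := by
  have h := L.sub_mem (L.smul_mem (2 : ℂ) (L.lie_mem h13 h31)) (hs hTwo_mem_slTwo)
  rwa [two_smul_lie_e13_e31, add_sub_cancel_right] at h

theorem hTwo_components_mem (hL : (L : Set (Matrix (Fin 3) (Fin 3) ℂ)) ⊆ sl3) (hs : slTwo ⊆ L)
    {X : Matrix (Fin 3) (Fin 3) ℂ} (hX : X ∈ L) :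
    (-(X 2 2) / 2) • hDiag ∈ L ∧ X 0 2 • e13 + X 2 1 • e32 ∈ L ∧
      X 1 2 • e23 + X 2 0 • e31 ∈ L := by
  have h := L.sub_mem hX (hs (slTwoPart_mem_slTwo X))
  rw [sub_slTwoPart_eq (hL hX)] at h
  refine L.ad_eigencomponents_mem (hs hTwo_mem_slTwo) ?_ ?_ ?_ h <;>
    simp [lie_hTwo_hDiag, lie_hTwo_e13, lie_hTwo_e32, lie_hTwo_e23, lie_hTwo_e31]
  abel

theorem smul_e13_mem_and_smul_e32_mem (hs : slTwo ⊆ L) {a d : ℂ} (h : a • e13 + d • e32 ∈ L) :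
    a • e13 ∈ L ∧ d • e32 ∈ L := by
  by_cases had : a = 0 ∨ d = 0
  · rcases had with rfl | rfl <;> simpa using h
  obtain ⟨ha, hd⟩ := not_or.1 had
  have hh : hDiag ∈ L := by
    have h' := L.lie_mem h (L.lie_mem (hs e21_mem_slTwo) h)
    rw [lie_lie_e21_plus] at h'
    exact (L.toSubmodule.smul_mem_iff (neg_ne_zero.2 (mul_ne_zero ha hd))).1 h'
  have h3 : (3 : ℂ)⁻¹ • hDiag ∈ L := L.smul_mem _ hh
  refine (L.ad_eigencomponents_mem h3 (u := 0) ?_ ?_ ?_ (by simpa using h)).2 <;>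
    simp [lie_hDiag_e13, lie_hDiag_e32, smul_smul]

theorem smul_e23_mem_and_smul_e31_mem (hs : slTwo ⊆ L) {b c : ℂ} (h : b • e23 + c • e31 ∈ L) :
    b • e23 ∈ L ∧ c • e31 ∈ L := by
  by_cases hbc : b = 0 ∨ c = 0
  · rcases hbc with rfl | rfl <;> simpa using h
  obtain ⟨hb, hc⟩ := not_or.1 hbc
  have hh : hDiag ∈ L := by
    have h' := L.lie_mem h (L.lie_mem (hs e12_mem_slTwo) h)
    rw [lie_lie_e12_minus] at h'
    exact (L.toSubmodule.smul_mem_iff (neg_ne_zero.2 (mul_ne_zero hb hc))).1 h'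
  have h3 : (3 : ℂ)⁻¹ • hDiag ∈ L := L.smul_mem _ hh
  refine (L.ad_eigencomponents_mem h3 (u := 0) ?_ ?_ ?_ (by simpa using h)).2 <;>
    simp [lie_hDiag_e23, lie_hDiag_e31, smul_smul]

theorem mem_iff_entries (hL : (L : Set (Matrix (Fin 3) (Fin 3) ℂ)) ⊆ sl3) (hs : slTwo ⊆ L)
    {X : Matrix (Fin 3) (Fin 3) ℂ} :
    X ∈ L ↔ X ∈ sl3 ∧ (e13 ∉ L → X 0 2 = 0 ∧ X 1 2 = 0) ∧
      (e31 ∉ L → X 2 0 = 0 ∧ X 2 1 = 0) ∧ (hDiag ∉ L → X 2 2 = 0) := by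
  constructor
  · intro hX
    obtain ⟨h0, hplus, hminus⟩ := hTwo_components_mem hL hs hX
    obtain ⟨h02, h21⟩ := smul_e13_mem_and_smul_e32_mem hs hplus
    obtain ⟨h12, h20⟩ := smul_e23_mem_and_smul_e31_mem hs hminus
    refine ⟨hL hX, fun h13 => ⟨L.eq_zero_of_smul_mem_of_notMem h02 h13, ?_⟩,
      fun h31 => ⟨L.eq_zero_of_smul_mem_of_notMem h20 h31, ?_⟩, fun hh => ?_⟩
    · exact L.eq_zero_of_smul_mem_of_notMem h12 (by rwa [e23_mem_iff hs])
    · exact L.eq_zero_of_smul_mem_of_notMem h21 (by rwa [e32_mem_iff hs])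
    · simpa using L.eq_zero_of_smul_mem_of_notMem h0 hh
  · rintro ⟨hX, h13, h31, hh⟩
    rw [eq_add_of_sub_eq' (sub_slTwoPart_eq hX)]
    refine L.add_mem (hs (slTwoPart_mem_slTwo X)) (L.add_mem (L.add_mem ?_ (L.add_mem ?_ ?_))
      (L.add_mem ?_ ?_)) <;> refine L.smul_mem_of_notMem_imp_eq_zero fun h => ?_
    · simp [hh h]
    · exact (h13 h).1
    · exact (h31 ((e32_mem_iff hs).not.1 h)).2
    · exact (h13 ((e23_mem_iff hs).not.1 h)).2
    · exact (h31 h).1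

theorem finrank_le_four_of_e13_notMem_of_e31_notMem
    (hL : (L : Set (Matrix (Fin 3) (Fin 3) ℂ)) ⊆ sl3) (hs : slTwo ⊆ L) (h13 : e13 ∉ L)
    (h31 : e31 ∉ L) : Module.finrank ℂ L ≤ 4 := by
  -- an element of `L` is determined by its upper-left `2 × 2` block
  let f : L →ₗ[ℂ] Fin 2 → Fin 2 → ℂ := LinearMap.pi fun i => LinearMap.pi fun j =>
    (entryLinearMap ℂ ℂ i.castSucc j.castSucc).comp (L.incl : L →ₗ[ℂ] _)
  have hf : Function.Injective f := by
    refine (injective_iff_map_eq_zero f).2 fun X hX => ?_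
    obtain ⟨htr, hplus, hminus, -⟩ := (mem_iff_entries hL hs).1 X.2
    obtain ⟨h02, h12⟩ := hplus h13
    obtain ⟨h20, h21⟩ := hminus h31
    have hblock : ∀ i j : Fin 2, (X : Matrix (Fin 3) (Fin 3) ℂ) i.castSucc j.castSucc = 0 :=
      fun i j => congr_fun (congr_fun hX i) j
    simp only [Fin.forall_fin_two, Fin.castSucc_zero, Fin.castSucc_one] at hblock
    obtain ⟨⟨h00, h01⟩, h10, h11⟩ := hblock
    have h22 : (X : Matrix (Fin 3) (Fin 3) ℂ) 2 2 = 0 := by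
      simpa [sl3, trace_fin_three, h00, h11] using htr
    ext i j
    fin_cases i <;> fin_cases j <;> assumption
  simpa [Module.finrank_pi_fintype] using LinearMap.finrank_le_finrank_of_injective hf

end

/-- **Classification of Lie subalgebras of `sl(3,ℂ)` of dimension at least `5` containing the
upper-left `sl(2,ℂ)`.** Any such subalgebra is `𝔰 ⊕ V₊`, `𝔰 ⊕ V₋`, `𝔰 ⊕ V₊ ⊕ ℂh`,
`𝔰 ⊕ V₋ ⊕ ℂh`, or all of `sl(3,ℂ)`. -/
theorem subalgebras_containing_sl2
    (L : LieSubalgebra ℂ (Matrix (Fin 3) (Fin 3) ℂ))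
    (hL : (L : Set (Matrix (Fin 3) (Fin 3) ℂ)) ⊆ sl3)
    (hs : slTwo ⊆ (L : Set (Matrix (Fin 3) (Fin 3) ℂ)))
    (hdim : 5 ≤ Module.finrank ℂ L) :
    (L : Set (Matrix (Fin 3) (Fin 3) ℂ)) = sVplus ∨
    (L : Set (Matrix (Fin 3) (Fin 3) ℂ)) = sVminus ∨
    (L : Set (Matrix (Fin 3) (Fin 3) ℂ)) = sVplusH ∨
    (L : Set (Matrix (Fin 3) (Fin 3) ℂ)) = sVminusH ∨
    (L : Set (Matrix (Fin 3) (Fin 3) ℂ)) = sl3 := by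
  have hmem (X : Matrix (Fin 3) (Fin 3) ℂ) : X ∈ (L : Set (Matrix (Fin 3) (Fin 3) ℂ)) ↔ _ :=
    mem_iff_entries hL hs
  simp only [Set.ext_iff, hmem, mem_sVplus_iff, mem_sVminus_iff, mem_sVplusH_iff,
    mem_sVminusH_iff]
  by_cases h13 : e13 ∈ L <;> by_cases h31 : e31 ∈ L
  · simp [h13, h31, hDiag_mem_of_e13_mem_of_e31_mem hs h13 h31]
  · by_cases hh : hDiag ∈ L <;> simp [h13, h31, hh, and_assoc]
  · by_cases hh : hDiag ∈ L <;> simp [h13, h31, hh, and_assoc]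
  · have := finrank_le_four_of_e13_notMem_of_e31_notMem hL hs h13 h31
    omega
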